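/- Let S = k[x₁,…,xₙ], d a degree sequence with dₙ < ∞, and ℘ = (x₁^{d₁},…,xₙ^{dₙ}). Let I be a monomial ideal with ℘ ⊊ I ⊊ S and J = ℘ : I. Then I is a d-lex-plus-powers ideal if and only if J is a d-lex-plus-powers ideal. -/

import Mathlib

open MvPolynomial

/-- total degree of an exponent vector -/
def expDeg {n : ℕ} (m : Fin n →₀ ℕ) : ℕ := m.sum fun _ e => e

/-- `u >_lex v` for the lexicographic order with `x₁ > x₂ > ⋯ > xₙ`
(variables indexed so that `X 0` is the largest). -/
def LexGT {n : ℕ} (u v : Fin n →₀ ℕ) : Prop :=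
  ∃ i : Fin n, v i < u i ∧ ∀ l : Fin n, l < i → u l = v l

/-- A monomial ideal: an ideal generated by monomials. -/
def IsMonomialIdeal {k : Type*} [Field k] {n : ℕ}
    (I : Ideal (MvPolynomial (Fin n) k)) : Prop :=
  ∃ A : Set (Fin n →₀ ℕ), I = Ideal.span ((fun m => (monomial m (1 : k))) '' A)

/-- A lex ideal: a monomial ideal such that in each degree its monomials form an
initial lex segment. -/
def IsLexIdeal {k : Type*} [Field k] {n : ℕ}
    (I : Ideal (MvPolynomial (Fin n) k)) : Prop :=
  IsMonomialIdeal I ∧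
    ∀ u v : Fin n →₀ ℕ, expDeg u = expDeg v → LexGT u v →
      monomial v (1 : k) ∈ I → monomial u (1 : k) ∈ I

/-- An `xₙ`-stable monomial ideal (in `n+1` variables `x₁,…,x_{n+1}`,
with `xₙ` interpreted as the last variable). -/
def IsXnStable {k : Type*} [Field k] {n : ℕ}
    (I : Ideal (MvPolynomial (Fin (n + 1)) k)) : Prop :=
  IsMonomialIdeal I ∧
    ∀ u : Fin (n + 1) →₀ ℕ, monomial u (1 : k) ∈ I → 1 ≤ u (Fin.last n) →
      ∀ i : Fin (n + 1), i < Fin.last n →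
        monomial (u + Finsupp.single i 1 - Finsupp.single (Fin.last n) 1) (1 : k) ∈ I

/-- A degree sequence: entries in `ℕ ∪ {∞}`, at least 1, weakly increasing. -/
def IsDegSeq {n : ℕ} (d : Fin n → ℕ∞) : Prop :=
  (∀ i, 1 ≤ d i) ∧ Monotone d

/-- The ideal `(x₁^{d₁}, …, xₙ^{dₙ})`, where `xᵢ^∞ = 0` (so infinite entries
contribute nothing). -/
noncomputable def powersIdeal {n : ℕ} (k : Type*) [Field k] (d : Fin n → ℕ∞) :
    Ideal (MvPolynomial (Fin n) k) :=
  Ideal.span {f | ∃ (i : Fin n) (e : ℕ), d i = (e : ℕ∞) ∧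
    f = monomial (Finsupp.single i e) (1 : k)}

/-- A `d`-lex-plus-powers ideal. -/
def IsLPP {k : Type*} [Field k] {n : ℕ} (d : Fin n → ℕ∞)
    (I : Ideal (MvPolynomial (Fin n) k)) : Prop :=
  ∃ L, IsLexIdeal L ∧ I = L ⊔ powersIdeal k d

/-- A `d`-stable-plus-powers ideal. -/
def IsSPP {k : Type*} [Field k] {n : ℕ} (d : Fin (n + 1) → ℕ∞)
    (I : Ideal (MvPolynomial (Fin (n + 1)) k)) : Prop :=
  ∃ J, IsXnStable J ∧ I = J ⊔ powersIdeal k d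

/-- Hilbert function of a (homogeneous) ideal: `HF(I; j) = dim_k [I]_j`. -/
noncomputable def hfI {k : Type*} [Field k] {n : ℕ}
    (I : Ideal (MvPolynomial (Fin n) k)) (j : ℕ) : ℕ :=
  Module.finrank k
    ↥(I.restrictScalars k ⊓ homogeneousSubmodule (Fin n) k j)

/-- Hilbert function of the quotient: `HF(S/I; j) = dim_k [S/I]_j`. -/
noncomputable def hfQ {k : Type*} [Field k] {n : ℕ}
    (I : Ideal (MvPolynomial (Fin n) k)) (j : ℕ) : ℕ :=
  Module.finrank k
    (↥(homogeneousSubmodule (Fin n) k j) ⧸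
      Submodule.comap (homogeneousSubmodule (Fin n) k j).subtype (I.restrictScalars k))

/-- An ideal is homogeneous iff it contains all homogeneous components of its
elements. -/
def IsHomogeneousIdeal {k : Type*} [Field k] {n : ℕ}
    (I : Ideal (MvPolynomial (Fin n) k)) : Prop :=
  ∀ f ∈ I, ∀ j : ℕ, homogeneousComponent j f ∈ I

/-- The inclusion `S̄ = k[x₁,…,xₙ] → S = k[x₁,…,x_{n+1}]`. -/
noncomputable def inclHom (k : Type*) [Field k] (n : ℕ) :
    MvPolynomial (Fin n) k →+* MvPolynomial (Fin (n + 1)) k :=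
  (MvPolynomial.rename (Fin.castSucc : Fin n → Fin (n + 1))).toRingHom

/-- The `i`-th slice `Iᵢ ⊆ S̄` in the decomposition `I = ⊕ᵢ Iᵢ xₙⁱ`
of a monomial ideal `I ⊆ S = S̄[xₙ]`, defined as `(I : xₙⁱ) ∩ S̄`. -/
noncomputable def idealSlice {k : Type*} [Field k] {n : ℕ}
    (I : Ideal (MvPolynomial (Fin (n + 1)) k)) (i : ℕ) :
    Ideal (MvPolynomial (Fin n) k) :=
  Ideal.comap (inclHom k n)
    (Submodule.colon I (Ideal.span {(X (Fin.last n) : MvPolynomial (Fin (n + 1)) k) ^ i}))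

/-- The maximal homogeneous ideal `(x₁,…,xₙ)` of a polynomial ring. -/
noncomputable def maxIdeal (k : Type*) [Field k] (n : ℕ) :
    Ideal (MvPolynomial (Fin n) k) :=
  Ideal.span (Set.range (X : Fin n → MvPolynomial (Fin n) k))

/-!
Write `℘ = (x₁^{D₁}, …, xₙ^{Dₙ})` and call the monomials outside `℘` the box. On the box,
`c ↦ socle - c` is an involution that preserves degree and reverses the lex order, and
`x^c ∈ ℘ : I` iff `x^{socle - c} ∉ I`. So if `I = L + ℘` with `L` lex, then for a box monomial
`x^c ∈ ℘ : I` every monomial of the same degree that is lex-above `c` is again in `℘ : I`: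
otherwise its dual lies in `L` and, `L` being lex, so does the dual of `c`. Hence `℘ : I` is
`℘` plus the ideal generated by the monomials whose whole lex-upper segment lies in `℘ : I`, and
that ideal is lex because such segments are stable under multiplication by a variable (remove a
suitable variable from a monomial lex-above `u·xᵢ` to get one lex-above `u`). The converse
follows by applying this to `℘ : I`, since `℘ : (℘ : I) = I` by the same duality.
-/

section Exponents

variable {n : ℕ}

theorem expDeg_eq_degree (m : Fin n →₀ ℕ) : expDeg m = m.degree := rfl

theorem expDeg_add (u v : Fin n →₀ ℕ) : expDeg (u + v) = expDeg u + expDeg v :=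
  map_add Finsupp.degree u v

theorem expDeg_single (i : Fin n) (e : ℕ) : expDeg (Finsupp.single i e) = e :=
  Finsupp.degree_single i e

theorem eq_of_le_of_expDeg_eq {u v : Fin n →₀ ℕ} (hle : u ≤ v)
    (hdeg : expDeg u = expDeg v) : u = v := by
  have h := expDeg_add u (v - u)
  rw [add_tsub_cancel_of_le hle, hdeg, left_eq_add, expDeg_eq_degree,
    Finsupp.degree_eq_zero_iff, tsub_eq_zero_iff_le] at h
  exact hle.antisymm h

theorem expDeg_sub_single {v : Fin n →₀ ℕ} {i : Fin n} (hv : v i ≠ 0) :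
    expDeg (v - Finsupp.single i 1) = expDeg v - 1 := by
  have h := expDeg_add (v - Finsupp.single i 1) (Finsupp.single i 1)
  rw [tsub_add_cancel_of_le (Finsupp.single_le_iff.mpr (by omega))] at h
  rw [expDeg_single] at h
  omega

theorem lexGT_iff (u v : Fin n →₀ ℕ) : LexGT u v ↔ toLex v < toLex u :=
  ⟨fun ⟨i, hi, hbefore⟩ => ⟨i, fun j hj => (hbefore j hj).symm, hi⟩,
    fun ⟨i, hbefore, hi⟩ => ⟨i, hi, fun j hj => (hbefore j hj).symm⟩⟩

theorem exists_toLex_le_sub_single {u v : Fin n →₀ ℕ} (hle : toLex u ≤ toLex v)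
    (hdeg : expDeg v = expDeg u + 1) :
    ∃ i, v i ≠ 0 ∧ toLex u ≤ toLex (v - Finsupp.single i 1) := by
  obtain ⟨p, hagree, hp⟩ := Finsupp.Lex.lt_iff.mp
    (hle.lt_of_ne fun h => by simp [toLex.injective h] at hdeg)
  simp only [ofLex_toLex] at hagree hp
  -- Drop a variable of `v` beyond the first position `p` where `v` exceeds `u`; if there is
  -- none, drop one at `p`, where in the tight case the degrees force `v - eₚ = u`.
  by_cases htail : ∃ q, p < q ∧ v q ≠ 0
  · obtain ⟨q, hpq, hq⟩ := htail
    refine ⟨q, hq, le_of_lt (Finsupp.Lex.lt_iff.mpr ⟨p, fun j hj => ?_, ?_⟩)⟩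
    · simp [(hj.trans hpq).ne', hagree j hj]
    · simpa [Finsupp.single_apply, hpq.ne'] using hp
  push Not at htail
  refine ⟨p, by omega, ?_⟩
  rcases (Nat.le_sub_one_of_lt hp).lt_or_eq with hlt | heq
  · refine le_of_lt (Finsupp.Lex.lt_iff.mpr ⟨p, fun j hj => ?_, by simpa using hlt⟩)
    simp [hj.ne', hagree j hj]
  · suffices h : v - Finsupp.single p 1 = u from (congrArg toLex h).ge
    refine eq_of_le_of_expDeg_eq (fun j => ?_) ?_
    · rcases lt_trichotomy j p with hj | rfl | hj
      · simp [hj.ne', hagree j hj]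
      · simp [heq]
      · simp [htail j hj]
    · rw [expDeg_sub_single (by omega), hdeg, Nat.add_sub_cancel]

end Exponents

section MonomialIdeal

variable {k : Type*} [Field k] {n : ℕ}

theorem monomial_mem_span_monomial_image_iff {s : Set (Fin n →₀ ℕ)} {c : Fin n →₀ ℕ} :
    monomial c (1 : k) ∈ Ideal.span ((fun m => monomial m (1 : k)) '' s) ↔
      ∃ m ∈ s, m ≤ c := by
  rw [mem_ideal_span_monomial_image]
  simp

theorem monomial_mem_of_le (I : Ideal (MvPolynomial (Fin n) k)) {m c : Fin n →₀ ℕ}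
    (hle : m ≤ c) (hm : monomial m (1 : k) ∈ I) : monomial c (1 : k) ∈ I := by
  rw [← tsub_add_cancel_of_le hle, ← mul_one (1 : k), ← monomial_mul]
  exact I.mul_mem_left _ hm

theorem isMonomialIdeal_of_forall_mem_support {I : Ideal (MvPolynomial (Fin n) k)}
    (h : ∀ f ∈ I, ∀ c ∈ f.support, monomial c (1 : k) ∈ I) : IsMonomialIdeal I := by
  refine ⟨{c | monomial c (1 : k) ∈ I}, le_antisymm (fun f hf => ?_) ?_⟩
  · exact mem_ideal_span_monomial_image.mpr fun c hc => ⟨c, h f hf c hc, le_rfl⟩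
  · exact Ideal.span_le.mpr (by rintro _ ⟨c, hc, rfl⟩; exact hc)

namespace IsMonomialIdeal

variable {I J : Ideal (MvPolynomial (Fin n) k)}

theorem eq_span (hI : IsMonomialIdeal I) :
    I = Ideal.span ((fun m => monomial m (1 : k)) '' {c | monomial c (1 : k) ∈ I}) := by
  obtain ⟨A, rfl⟩ := hI
  refine le_antisymm (Ideal.span_mono (Set.image_mono fun a ha => ?_)) ?_
  · exact Ideal.subset_span (Set.mem_image_of_mem _ ha)
  · exact Ideal.span_le.mpr (by rintro _ ⟨c, hc, rfl⟩; exact hc)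

theorem mem_iff (hI : IsMonomialIdeal I) {f : MvPolynomial (Fin n) k} :
    f ∈ I ↔ ∀ c ∈ f.support, monomial c (1 : k) ∈ I := by
  conv_lhs => rw [hI.eq_span]
  rw [mem_ideal_span_monomial_image]
  exact forall₂_congr fun c _ =>
    ⟨fun ⟨m, hm, hle⟩ => monomial_mem_of_le I hle hm, fun hc => ⟨c, hc, le_rfl⟩⟩

theorem ext (hI : IsMonomialIdeal I) (hJ : IsMonomialIdeal J)
    (h : ∀ c, monomial c (1 : k) ∈ I ↔ monomial c (1 : k) ∈ J) : I = J := by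
  ext f
  rw [hI.mem_iff, hJ.mem_iff]
  exact forall₂_congr fun c _ => h c

theorem monomial_mem_sup_iff (hI : IsMonomialIdeal I) (hJ : IsMonomialIdeal J)
    {c : Fin n →₀ ℕ} :
    monomial c (1 : k) ∈ I ⊔ J ↔ monomial c (1 : k) ∈ I ∨ monomial c (1 : k) ∈ J := by
  conv_lhs => rw [hI.eq_span, hJ.eq_span, ← Ideal.span_union, ← Set.image_union,
    monomial_mem_span_monomial_image_iff]
  constructor
  · rintro ⟨m, hm | hm, hle⟩
    exacts [Or.inl (monomial_mem_of_le I hle hm), Or.inr (monomial_mem_of_le J hle hm)]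
  · rintro (hc | hc)
    exacts [⟨c, Or.inl hc, le_rfl⟩, ⟨c, Or.inr hc, le_rfl⟩]

theorem monomial_mem_colon_iff (M : Ideal (MvPolynomial (Fin n) k)) (hI : IsMonomialIdeal I)
    {c : Fin n →₀ ℕ} :
    monomial c (1 : k) ∈ M.colon I ↔
      ∀ a, monomial a (1 : k) ∈ I → monomial (c + a) (1 : k) ∈ M := by
  conv_lhs => rw [hI.eq_span, Ideal.colon_span]
  rw [Submodule.mem_colon, Set.forall_mem_image]
  simp only [Set.mem_ofPred_eq, smul_eq_mul, monomial_mul, mul_one]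

theorem colon {M : Ideal (MvPolynomial (Fin n) k)} (hM : IsMonomialIdeal M)
    (hI : IsMonomialIdeal I) : IsMonomialIdeal (M.colon I) := by
  refine isMonomialIdeal_of_forall_mem_support fun f hf c hc => ?_
  refine (monomial_mem_colon_iff M hI).mpr fun a ha =>
    (hM.mem_iff (f := f * monomial a 1)).mp (Submodule.mem_colon.mp hf _ ha) (c + a) ?_
  rwa [mem_support_iff, coeff_mul_monomial, mul_one, ← mem_support_iff]

end IsMonomialIdeal

end MonomialIdeal

section PowersIdeal

variable {k : Type*} [Field k] {n : ℕ}

theorem powersIdeal_eq_span (d : Fin n → ℕ∞) :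
    powersIdeal k d = Ideal.span ((fun m => monomial m (1 : k)) ''
      {m | ∃ (i : Fin n) (e : ℕ), d i = (e : ℕ∞) ∧ m = Finsupp.single i e}) := by
  rw [powersIdeal]
  congr 1
  ext f
  simp only [Set.mem_image, Set.mem_ofPred_eq]
  constructor
  · rintro ⟨i, e, he, rfl⟩
    exact ⟨_, ⟨i, e, he, rfl⟩, rfl⟩
  · rintro ⟨_, ⟨i, e, he, rfl⟩, rfl⟩
    exact ⟨i, e, he, rfl⟩

theorem isMonomialIdeal_powersIdeal (d : Fin n → ℕ∞) : IsMonomialIdeal (powersIdeal k d) :=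
  ⟨_, powersIdeal_eq_span d⟩

theorem monomial_mem_powersIdeal_iff {d : Fin n → ℕ∞} {c : Fin n →₀ ℕ} :
    monomial c (1 : k) ∈ powersIdeal k d ↔ ∃ i, d i ≤ c i := by
  rw [powersIdeal_eq_span, monomial_mem_span_monomial_image_iff]
  constructor
  · rintro ⟨_, ⟨i, e, he, rfl⟩, hle⟩
    exact ⟨i, he ▸ Nat.cast_le.mpr (Finsupp.single_le_iff.mp hle)⟩
  · rintro ⟨i, hi⟩
    obtain ⟨e, he, hle⟩ := ENat.le_natCast_iff.mp hi
    exact ⟨_, ⟨i, e, he, rfl⟩, Finsupp.single_le_iff.mpr hle⟩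

end PowersIdeal

section LexInterior

variable {k : Type*} [Field k] {n : ℕ}

def lexInteriorExps (J : Ideal (MvPolynomial (Fin n) k)) : Set (Fin n →₀ ℕ) :=
  {u | ∀ v, expDeg v = expDeg u → toLex u ≤ toLex v → monomial v (1 : k) ∈ J}

/-- The largest lex ideal contained in `J`. -/
noncomputable def lexInterior (J : Ideal (MvPolynomial (Fin n) k)) :
    Ideal (MvPolynomial (Fin n) k) :=
  Ideal.span ((fun m => monomial m (1 : k)) '' lexInteriorExps J)

variable {J : Ideal (MvPolynomial (Fin n) k)}

theorem add_single_mem_lexInteriorExps {u : Fin n →₀ ℕ} (hu : u ∈ lexInteriorExps J)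
    (i : Fin n) : u + Finsupp.single i 1 ∈ lexInteriorExps J := by
  intro v hdeg hle
  rw [expDeg_add, expDeg_single] at hdeg
  obtain ⟨j, hj, hlex⟩ :=
    exists_toLex_le_sub_single ((Finsupp.toLex_monotone le_self_add).trans hle) hdeg
  exact monomial_mem_of_le J tsub_le_self
    (hu _ (by rw [expDeg_sub_single hj, hdeg, Nat.add_sub_cancel]) hlex)

theorem add_mem_lexInteriorExps {u : Fin n →₀ ℕ} (hu : u ∈ lexInteriorExps J)
    (s : Fin n →₀ ℕ) : u + s ∈ lexInteriorExps J := by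
  induction s using Finsupp.induction_linear generalizing u with
  | zero => simpa using hu
  | add f g hf hg => simpa only [add_assoc] using hg (hf hu)
  | single i b =>
    induction b with
    | zero => simpa using hu
    | succ b ih => simpa only [Finsupp.single_add, ← add_assoc] using
        add_single_mem_lexInteriorExps ih i

theorem lexInterior_le : lexInterior J ≤ J :=
  Ideal.span_le.mpr <| by
    rintro _ ⟨u, hu, rfl⟩
    exact hu u rfl le_rfl

theorem isLexIdeal_lexInterior : IsLexIdeal (lexInterior J) := by
  refine ⟨⟨_, rfl⟩, fun u v hdeg hgt hv => Ideal.subset_span ⟨u, fun w hw hle => ?_, rfl⟩⟩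
  obtain ⟨t, ht, htv⟩ := monomial_mem_span_monomial_image_iff.mp hv
  have hvJ : v ∈ lexInteriorExps J :=
    add_tsub_cancel_of_le htv ▸ add_mem_lexInteriorExps ht _
  exact hvJ w (hw.trans hdeg) (((lexGT_iff u v).mp hgt).le.trans hle)

end LexInterior

section Duality

variable {k : Type*} [Field k] {n : ℕ} {D : Fin n → ℕ}

/-- The exponent of the socle monomial `x₁^{D₁-1} ⋯ xₙ^{Dₙ-1}` of `S ⧸ (x₁^{D₁}, …, xₙ^{Dₙ})`. -/
noncomputable def socleExp (D : Fin n → ℕ) : Fin n →₀ ℕ :=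
  Finsupp.equivFunOnFinite.symm fun i => D i - 1

@[simp]
theorem socleExp_apply (D : Fin n → ℕ) (i : Fin n) : socleExp D i = D i - 1 := rfl

theorem monomial_mem_powersIdeal_natCast_iff {c : Fin n →₀ ℕ} :
    monomial c (1 : k) ∈ powersIdeal k (fun i => (D i : ℕ∞)) ↔ ∃ i, D i ≤ c i := by
  simp only [monomial_mem_powersIdeal_iff, Nat.cast_le]

theorem socleExp_sub_lt {c : Fin n →₀ ℕ} (hc : ∀ i, c i < D i) (i : Fin n) :
    (socleExp D - c) i < D i := by
  have := hc i
  simp only [Finsupp.tsub_apply, socleExp_apply]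
  omega

theorem socleExp_sub_sub {c : Fin n →₀ ℕ} (hc : ∀ i, c i < D i) :
    socleExp D - (socleExp D - c) = c := by
  ext i
  have := hc i
  simp only [Finsupp.tsub_apply, socleExp_apply]
  omega

theorem expDeg_socleExp_sub {c v : Fin n →₀ ℕ} (hc : ∀ i, c i < D i) (hv : ∀ i, v i < D i)
    (hdeg : expDeg c = expDeg v) : expDeg (socleExp D - c) = expDeg (socleExp D - v) := by
  have hsum : ∀ {u : Fin n →₀ ℕ}, (∀ i, u i < D i) →
      expDeg u + expDeg (socleExp D - u) = expDeg (socleExp D) := fun hu => by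
    rw [← expDeg_add,
      add_tsub_cancel_of_le fun i => by simpa using Nat.le_sub_one_of_lt (hu i)]
  have := hsum hc
  have := hsum hv
  omega

theorem toLex_socleExp_sub_lt {c v : Fin n →₀ ℕ} (hv : ∀ i, v i < D i)
    (hlt : toLex c < toLex v) : toLex (socleExp D - v) < toLex (socleExp D - c) := by
  obtain ⟨i, hagree, hi⟩ := Finsupp.Lex.lt_iff.mp hlt
  simp only [ofLex_toLex] at hagree hi
  refine Finsupp.Lex.lt_iff.mpr ⟨i, fun j hj => ?_, ?_⟩
  · simp [hagree j hj]
  · have := hv i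
    simp only [ofLex_toLex, Finsupp.tsub_apply, socleExp_apply]
    omega

theorem monomial_mem_colon_powersIdeal_iff {I : Ideal (MvPolynomial (Fin n) k)}
    (hI : IsMonomialIdeal I) {c : Fin n →₀ ℕ} (hc : ∀ i, c i < D i) :
    monomial c (1 : k) ∈ (powersIdeal k (fun i => (D i : ℕ∞))).colon I ↔
      monomial (socleExp D - c) (1 : k) ∉ I := by
  simp only [hI.monomial_mem_colon_iff _, monomial_mem_powersIdeal_natCast_iff]
  constructor
  · intro h hmem
    obtain ⟨i, hi⟩ := h _ hmem
    have := hc i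
    simp only [Finsupp.add_apply, Finsupp.tsub_apply, socleExp_apply] at hi
    omega
  · intro h a ha
    by_contra! hlt
    refine h (monomial_mem_of_le I (fun i => ?_) ha)
    have := hlt i
    simp only [Finsupp.add_apply, Finsupp.tsub_apply, socleExp_apply] at this ⊢
    omega

theorem colon_colon_powersIdeal {I : Ideal (MvPolynomial (Fin n) k)} (hI : IsMonomialIdeal I)
    (hle : powersIdeal k (fun i => (D i : ℕ∞)) ≤ I) :
    (powersIdeal k (fun i => (D i : ℕ∞))).colon
      ((powersIdeal k (fun i => (D i : ℕ∞))).colon I) = I := by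
  have hP := isMonomialIdeal_powersIdeal (k := k) fun i => (D i : ℕ∞)
  refine (hP.colon (hP.colon hI)).ext hI fun c => ?_
  by_cases hc : ∀ i, c i < D i
  · rw [monomial_mem_colon_powersIdeal_iff (hP.colon hI) hc,
      monomial_mem_colon_powersIdeal_iff hI (socleExp_sub_lt hc), socleExp_sub_sub hc, not_not]
  · push Not at hc
    have hcP := monomial_mem_powersIdeal_natCast_iff (k := k) |>.mpr hc
    exact iff_of_true (Ideal.le_colon hcP) (hle hcP)

theorem mem_lexInteriorExps_colon_powersIdeal {I L : Ideal (MvPolynomial (Fin n) k)}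
    (hI : IsMonomialIdeal I) (hL : IsLexIdeal L)
    (hIL : I = L ⊔ powersIdeal k (fun i => (D i : ℕ∞))) {c : Fin n →₀ ℕ}
    (hc : ∀ i, c i < D i)
    (hcJ : monomial c (1 : k) ∈ (powersIdeal k (fun i => (D i : ℕ∞))).colon I) :
    c ∈ lexInteriorExps ((powersIdeal k (fun i => (D i : ℕ∞))).colon I) := by
  intro v hdeg hle
  by_cases hv : ∀ i, v i < D i
  swap
  · push Not at hv
    exact Ideal.le_colon (monomial_mem_powersIdeal_natCast_iff.mpr hv)
  rw [monomial_mem_colon_powersIdeal_iff hI hc] at hcJ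
  rw [monomial_mem_colon_powersIdeal_iff hI hv]
  intro hvI
  rcases hle.eq_or_lt with heq | hlt
  · exact hcJ (toLex.injective heq ▸ hvI)
  rw [hIL, hL.1.monomial_mem_sup_iff (isMonomialIdeal_powersIdeal _),
    monomial_mem_powersIdeal_natCast_iff] at hvI
  rcases hvI with hvL | ⟨i, hi⟩
  · refine hcJ (hIL ▸ Ideal.mem_sup_left (hL.2 _ _ ?_ ?_ hvL))
    exacts [expDeg_socleExp_sub hc hv hdeg.symm,
      (lexGT_iff _ _).mpr (toLex_socleExp_sub_lt hv hlt)]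
  · exact (socleExp_sub_lt hv i).not_ge hi

theorem colon_powersIdeal_eq_lexInterior_sup {I L : Ideal (MvPolynomial (Fin n) k)}
    (hI : IsMonomialIdeal I) (hL : IsLexIdeal L)
    (hIL : I = L ⊔ powersIdeal k (fun i => (D i : ℕ∞))) :
    (powersIdeal k (fun i => (D i : ℕ∞))).colon I =
      lexInterior ((powersIdeal k (fun i => (D i : ℕ∞))).colon I) ⊔
        powersIdeal k (fun i => (D i : ℕ∞)) := by
  have hP := isMonomialIdeal_powersIdeal (k := k) fun i => (D i : ℕ∞)
  refine le_antisymm ((hP.colon hI).eq_span.le.trans (Ideal.span_le.mpr ?_))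
    (sup_le lexInterior_le Ideal.le_colon)
  rintro _ ⟨c, hcJ, rfl⟩
  by_cases hc : ∀ i, c i < D i
  · exact Ideal.mem_sup_left (Ideal.subset_span
      ⟨c, mem_lexInteriorExps_colon_powersIdeal hI hL hIL hc hcJ, rfl⟩)
  · push Not at hc
    exact Ideal.mem_sup_right (monomial_mem_powersIdeal_natCast_iff.mpr hc)

theorem IsLPP.colon_powersIdeal {I : Ideal (MvPolynomial (Fin n) k)} (hI : IsMonomialIdeal I)
    (hLPP : IsLPP (fun i => (D i : ℕ∞)) I) :
    IsLPP (fun i => (D i : ℕ∞)) ((powersIdeal k (fun i => (D i : ℕ∞))).colon I) :=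
  let ⟨_, hL, hIL⟩ := hLPP
  ⟨_, isLexIdeal_lexInterior, colon_powersIdeal_eq_lexInterior_sup hI hL hIL⟩

end Duality

theorem isLPP_iff_isLPP_link_general
    {k : Type*} [Field k] {n : ℕ} (d : Fin (n + 1) → ℕ∞) (hd : IsDegSeq d)
    (e : ℕ) (he : d (Fin.last n) = (e : ℕ∞))
    (I : Ideal (MvPolynomial (Fin (n + 1)) k)) (hI : IsMonomialIdeal I)
    (hlt : powersIdeal k d < I)
    (J : Ideal (MvPolynomial (Fin (n + 1)) k))
    (hJ : J = Submodule.colon (powersIdeal k d) I) :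
    IsLPP d I ↔ IsLPP d J := by
  obtain ⟨D, rfl⟩ : ∃ D : Fin (n + 1) → ℕ, d = fun i => (D i : ℕ∞) :=
    ⟨fun i => (d i).toNat, funext fun i => (ENat.natCast_toNat <| ne_top_of_le_ne_top
      (he ▸ ENat.natCast_ne_top e) (hd.2 (Fin.le_last i))).symm⟩
  subst hJ
  have hP := isMonomialIdeal_powersIdeal (k := k) fun i => (D i : ℕ∞)
  refine ⟨IsLPP.colon_powersIdeal hI, fun hLink => ?_⟩
  rw [← colon_colon_powersIdeal hI hlt.le]
  exact hLink.colon_powersIdeal (hP.colon hI)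

/-- Let `d` be a degree sequence with `d_{n+1} < ∞`,
`℘ = (x₁^{d₁},…,x_{n+1}^{d_{n+1}})`, `I` a monomial ideal with `℘ ⊊ I ⊊ S`, and
`J = ℘ : I`. Then `I` is `d`-lex-plus-powers iff `J` is `d`-lex-plus-powers. -/
theorem isLPP_iff_isLPP_link
    {k : Type*} [Field k] {n : ℕ} (d : Fin (n + 1) → ℕ∞) (hd : IsDegSeq d)
    (e : ℕ) (he : d (Fin.last n) = (e : ℕ∞))
    (I : Ideal (MvPolynomial (Fin (n + 1)) k)) (hI : IsMonomialIdeal I)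
    (hlt : powersIdeal k d < I) (hne : I ≠ ⊤)
    (J : Ideal (MvPolynomial (Fin (n + 1)) k))
    (hJ : J = Submodule.colon (powersIdeal k d) I) :
    IsLPP d I ↔ IsLPP d J :=
  isLPP_iff_isLPP_link_general d hd e he I hI hlt J hJ
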